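/- Let w¹,…,wᵗ be atomic saturable designs with pairwise distinct first letters, and let a,b be complementary letters with w^i_1 ≠ b for all i. Then W = a w¹ ⋯ wᵗ b is an atomic saturable design (for the structure enclosing S¹⋯Sᵗ in a base pair (1,|W|)). -/

import Mathlib

/-!
Read A and G as the two generators of the free group on two letters and U, C as their
inverses. Watson–Crick complementarity becomes inversion, and a sequence is saturable exactly
when it represents 1: a saturated structure splits w as c·u·c̄·v with u, v saturable, and
conversely a free reduction of w to the empty word is undone by inserting adjacent base pairs.
So if u and uv are saturable then so is v, and a saturable prefix of a concatenation of atomic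
saturable words consists of whole blocks.

In a saturated structure on W = a w¹ ⋯ wᵗ b, the partner of a is preceded by a saturable word,
so it is the first letter of a block and not b; hence no proper prefix of W is saturable and the
outer pair is forced. Inside it, the partner of the first letter of w¹ ends a saturable prefix,
i.e. the last letter of a block, which is complementary to that block's first letter; distinct
first letters force the block to be w¹. Peeling off blocks this way, the structure restricts to
a saturated structure on each wⁱ, which is Sⁱ because wⁱ is a design. With unit energies a
design is exactly the unique saturated compatible structure.
-/

open scoped Classical

/-- An RNA nucleotide. -/
inductive Base | A | U | C | G
deriving DecidableEq, Inhabited, Repr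

/-- The Watson-Crick pairing relation (only G-C and A-U pairs allowed). -/
def wcPair : Base → Base → Prop
  | .G, .C => True | .C, .G => True
  | .A, .U => True | .U, .A => True
  | _, _ => False

/-- The Nussinov-Jacobson pairing relation (G-C, A-U and G-U pairs allowed). -/
def njPair : Base → Base → Prop
  | .G, .C => True | .C, .G => True
  | .A, .U => True | .U, .A => True
  | .G, .U => True | .U, .G => True
  | _, _ => False

/-- An RNA (pseudoknot-free) secondary structure, 0-indexed positions. -/
structure SecStr where
  len : ℕ
  pairs : Finset (ℕ × ℕ)
  lt : ∀ p ∈ pairs, p.1 < p.2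
  ub : ∀ p ∈ pairs, p.2 < len
  once : ∀ p ∈ pairs, ∀ q ∈ pairs, p ≠ q →
    p.1 ≠ q.1 ∧ p.1 ≠ q.2 ∧ p.2 ≠ q.1 ∧ p.2 ≠ q.2
  noncross : ∀ p ∈ pairs, ∀ q ∈ pairs,
    ¬ (p.1 < q.1 ∧ q.1 < p.2 ∧ p.2 < q.2)

def SecStr.pairedAt (S : SecStr) (i : ℕ) : Prop := ∃ p ∈ S.pairs, p.1 = i ∨ p.2 = i
def SecStr.unpairedAt (S : SecStr) (i : ℕ) : Prop := i < S.len ∧ ¬ S.pairedAt i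
def SecStr.saturated (S : SecStr) : Prop := ∀ i < S.len, S.pairedAt i

/-- A structure is compatible with a sequence `w` (w.r.t. pairing relation `R`)
if it has the right length and all base pairs are `R`-valid. -/
def compat {α : Type*} [Inhabited α] (R : α → α → Prop) (w : List α) (S : SecStr) : Prop :=
  S.len = w.length ∧ ∀ p ∈ S.pairs, R (w.getD p.1 default) (w.getD p.2 default)

/-- Base-pair-sum free energy of a structure on a sequence. -/
noncomputable def energy {α : Type*} [Inhabited α] (E : α → α → ℝ) (w : List α)
    (S : SecStr) : ℝ :=
  ∑ p ∈ S.pairs, E (w.getD p.1 default) (w.getD p.2 default)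

/-- `w` is a Δ-design for `S`: `S` is compatible with `w`, and every other
compatible structure has energy at least `energy E w S + Δ`. -/
def isDesign {α : Type*} [Inhabited α] (R : α → α → Prop) (E : α → α → ℝ) (Δ : ℝ)
    (w : List α) (S : SecStr) : Prop :=
  compat R w S ∧ ∀ S' : SecStr, compat R w S' → S' ≠ S →
    energy E w S' ≥ energy E w S + Δ

/- Tree representation machinery. -/
def encloses (q p : ℕ × ℕ) : Prop := q.1 < p.1 ∧ p.2 < q.2
def SecStr.hasParent (S : SecStr) (p : ℕ × ℕ) : Prop := ∃ q ∈ S.pairs, encloses q p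
def SecStr.isParentOf (S : SecStr) (q p : ℕ × ℕ) : Prop :=
  q ∈ S.pairs ∧ p ∈ S.pairs ∧ encloses q p ∧ ¬ ∃ m ∈ S.pairs, encloses q m ∧ encloses m p

/-- Degree of a paired node: number of paired children plus one for the parent (if any). -/
noncomputable def SecStr.pairDeg (S : SecStr) (p : ℕ × ℕ) : ℕ :=
  (S.pairs.filter (fun c => S.isParentOf p c)).card + (if S.hasParent p then 1 else 0)
/-- Degree of the virtual root: number of top-level base pairs. -/
noncomputable def SecStr.rootDeg (S : SecStr) : ℕ :=
  (S.pairs.filter (fun p => ¬ S.hasParent p)).card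
/-- All nodes of the tree representation (including the virtual root) have degree ≤ d. -/
def SecStr.degLE (S : SecStr) (d : ℕ) : Prop :=
  S.rootDeg ≤ d ∧ ∀ p ∈ S.pairs, S.pairDeg p ≤ d

/-- A sequence is saturable if a saturated structure is compatible with it. -/
def saturable {α : Type*} [Inhabited α] (R : α → α → Prop) (w : List α) : Prop :=
  ∃ S : SecStr, compat R w S ∧ S.saturated
/-- Atomic saturable: saturable, and no (nonempty) proper prefix is saturable. -/
def atomicSaturable {α : Type*} [Inhabited α] (R : α → α → Prop) (w : List α) : Prop :=
  saturable R w ∧ ∀ k, 0 < k → k < w.length → ¬ saturable R (w.take k)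

/- Motifs. -/
def SecStr.unpChildOfPair (S : SecStr) (q : ℕ × ℕ) (u : ℕ) : Prop :=
  S.unpairedAt u ∧ q.1 < u ∧ u < q.2 ∧
    ¬ ∃ m ∈ S.pairs, q.1 < m.1 ∧ m.1 < u ∧ u < m.2 ∧ m.2 < q.2
def SecStr.unpChildOfRoot (S : SecStr) (u : ℕ) : Prop :=
  S.unpairedAt u ∧ ¬ ∃ m ∈ S.pairs, m.1 < u ∧ u < m.2
/-- Motif m₅ : a tree node (possibly the root) of degree greater than four. -/
def hasM5 (S : SecStr) : Prop := 4 < S.rootDeg ∨ ∃ p ∈ S.pairs, 4 < S.pairDeg p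
/-- Motif m₃∘ : a node with an unpaired child and degree greater than two. -/
def hasM3o (S : SecStr) : Prop :=
  (∃ q ∈ S.pairs, (∃ u, S.unpChildOfPair q u) ∧ 2 < S.pairDeg q) ∨
  ((∃ u, S.unpChildOfRoot u) ∧ 2 < S.rootDeg)

/- Colorings of the tree representation. -/
inductive Col | black | white | gray
deriving DecidableEq

noncomputable def childCount (S : SecStr) (col : ℕ × ℕ → Col) (q : ℕ × ℕ) (c : Col) : ℕ :=
  (S.pairs.filter (fun p => S.isParentOf q p ∧ col p = c)).card
noncomputable def rootChildCount (S : SecStr) (col : ℕ × ℕ → Col) (c : Col) : ℕ :=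
  (S.pairs.filter (fun p => ¬ S.hasParent p ∧ col p = c)).card

/-- A proper coloring of the tree representation. -/
def properCol (S : SecStr) (col : ℕ × ℕ → Col) : Prop :=
  rootChildCount S col .black ≤ 1 ∧ rootChildCount S col .white ≤ 1 ∧
  rootChildCount S col .gray ≤ 2 ∧
  ∀ q ∈ S.pairs,
    childCount S col q .black ≤ 1 ∧ childCount S col q .white ≤ 1 ∧
    childCount S col q .gray ≤ 2 ∧
    childCount S col q (col q) ≤ 1 ∧
    (col q = .black → ∀ p ∈ S.pairs, S.isParentOf q p → col p ≠ .white) ∧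
    (col q = .white → ∀ p ∈ S.pairs, S.isParentOf q p → col p ≠ .black)

/-- Level of a paired node: #black minus #white on the path to the root (incl. itself). -/
noncomputable def pairLvl (S : SecStr) (col : ℕ × ℕ → Col) (p : ℕ × ℕ) : ℤ :=
  ((S.pairs.filter (fun q => q.1 ≤ p.1 ∧ p.2 ≤ q.2 ∧ col q = .black)).card : ℤ) -
  ((S.pairs.filter (fun q => q.1 ≤ p.1 ∧ p.2 ≤ q.2 ∧ col q = .white)).card : ℤ)
/-- Level of an unpaired node. -/
noncomputable def unpLvl (S : SecStr) (col : ℕ × ℕ → Col) (u : ℕ) : ℤ :=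
  ((S.pairs.filter (fun q => q.1 < u ∧ u < q.2 ∧ col q = .black)).card : ℤ) -
  ((S.pairs.filter (fun q => q.1 < u ∧ u < q.2 ∧ col q = .white)).card : ℤ)

/-- Separated coloring: gray-node levels and unpaired-node levels are disjoint. -/
def separatedCol (S : SecStr) (col : ℕ × ℕ → Col) : Prop :=
  ∀ p ∈ S.pairs, col p = .gray → ∀ u, S.unpairedAt u →
    pairLvl S col p ≠ unpLvl S col u

/-- A bipartite energy model: its compatibility graph is bipartite. -/
def Bipartite {α : Type*} (R : α → α → Prop) : Prop :=
  ∃ f : α → Bool, ∀ a b, R a b → f a ≠ f b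

/-- The k-stutter of a sequence. -/
def stutterSeq {α : Type*} (w : List α) (k : ℕ) : List α :=
  w.flatMap (fun a => List.replicate k a)
/-- The base pairs of the k-stutter of a structure. -/
def stutterPairs (S : SecStr) (k : ℕ) : Finset (ℕ × ℕ) :=
  S.pairs.biUnion (fun p => (Finset.range k).image
    (fun m => (k * p.1 + m, k * p.2 + (k - 1 - m))))

/-- Two base pairs belong to the same band (maximal stack) of S. -/
def sameBand (S : SecStr) (p p' : ℕ × ℕ) : Prop :=
  p ∈ S.pairs ∧ p' ∈ S.pairs ∧ p.1 + p.2 = p'.1 + p'.2 ∧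
  ∀ x, min p.1 p'.1 ≤ x → x ≤ max p.1 p'.1 → (x, p.1 + p.2 - x) ∈ S.pairs

/-- Nussinov-Jacobson energies: a for G-C, b for A-U, g for G-U. -/
def njE (a b g : ℝ) : Base → Base → ℝ
  | .G, .C => a | .C, .G => a
  | .A, .U => b | .U, .A => b
  | .G, .U => g | .U, .G => g
  | _, _ => 0

/-- level of position i : #G minus #C in the prefix of w ending at i. -/
def lvl (w : List Base) (i : ℕ) : ℤ :=
  ((w.take (i+1)).count Base.G : ℤ) - ((w.take (i+1)).count Base.C : ℤ)


namespace Base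

def comp : Base → Base
  | .A => .U | .U => .A | .C => .G | .G => .C

theorem comp_injective : Function.Injective comp := by
  intro x y; cases x <;> cases y <;> simp [comp]

end Base

theorem wcPair_iff {x y : Base} : wcPair x y ↔ y = x.comp := by
  cases x <;> cases y <;> simp [wcPair, Base.comp]

attribute [ext] SecStr

namespace SecStr

variable {S : SecStr}

theorem exists_mem_pairs_zero (hS : S.saturated) (h : 0 < S.len) : ∃ m, (0, m) ∈ S.pairs := by
  obtain ⟨⟨i, m⟩, hp, hi | hm⟩ := hS 0 h
  · exact ⟨m, hi ▸ hp⟩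
  · have := S.lt _ hp; simp_all

theorem eq_or_inside_or_right_of_mem {m : ℕ} (h0 : (0, m) ∈ S.pairs) {p : ℕ × ℕ}
    (hp : p ∈ S.pairs) : (p.1 = 0 ∧ p.2 = m) ∨ (0 < p.1 ∧ p.2 < m) ∨ m < p.1 := by
  by_cases hpm : p = (0, m)
  · exact Or.inl (by simp [hpm])
  · have := S.once p hp _ h0 hpm
    have := S.noncross _ h0 p hp
    have := S.lt p hp
    omega

def endpoints (S : SecStr) : Finset ℕ := S.pairs.biUnion fun p => {p.1, p.2}

theorem card_endpoints : S.endpoints.card = 2 * S.pairs.card := by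
  rw [endpoints, Finset.card_biUnion, Finset.sum_const_nat fun p hp => ?_, mul_comm]
  · exact Finset.card_pair (S.lt p hp).ne
  · intro p hp q hq hpq
    have := S.once p hp q hq hpq
    simp only [Function.onFun, Finset.disjoint_insert_left, Finset.disjoint_insert_right,
      Finset.disjoint_singleton, Finset.mem_insert, Finset.mem_singleton]
    omega

theorem endpoints_subset_range : S.endpoints ⊆ Finset.range S.len := by
  simp only [endpoints, Finset.biUnion_subset, Finset.insert_subset_iff,
    Finset.singleton_subset_iff, Finset.mem_range]
  exact fun p hp => ⟨(S.lt p hp).trans (S.ub p hp), S.ub p hp⟩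

theorem two_mul_card_pairs_le : 2 * S.pairs.card ≤ S.len := by
  simpa [card_endpoints] using Finset.card_le_card S.endpoints_subset_range

theorem saturated_iff_two_mul_card_pairs_eq : S.saturated ↔ 2 * S.pairs.card = S.len := by
  have hsat : S.saturated ↔ Finset.range S.len ⊆ S.endpoints := by
    simp only [saturated, pairedAt, Finset.subset_iff, Finset.mem_range, endpoints,
      Finset.mem_biUnion, Finset.mem_insert, Finset.mem_singleton, eq_comm]
  rw [hsat, ← card_endpoints]
  constructor
  · intro h
    simpa using congrArg Finset.card (Finset.Subset.antisymm endpoints_subset_range h)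
  · intro h
    exact (Finset.eq_of_subset_of_card_le endpoints_subset_range (by simp [h])).symm.subset

end SecStr

section ConstantEnergy

variable {α : Type*} [Inhabited α] {R : α → α → Prop} {w : List α} {S : SecStr}

theorem energy_neg_one (w : List α) (S : SecStr) :
    energy (fun _ _ => (-1 : ℝ)) w S = -S.pairs.card := by
  simp [energy]

theorem isDesign_neg_one_iff (hS : S.saturated) :
    isDesign R (fun _ _ => (-1 : ℝ)) 1 w S ↔
      compat R w S ∧ ∀ S', compat R w S' → S'.saturated → S' = S := by
  refine and_congr_right fun hc => forall_congr' fun S' => forall_congr' fun hc' => ?_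
  have hlen : S'.len = S.len := hc'.1.trans hc.1.symm
  have hcard := SecStr.saturated_iff_two_mul_card_pairs_eq.mp hS
  have hle := S'.two_mul_card_pairs_le
  have hgap :
      -(S'.pairs.card : ℝ) ≥ -S.pairs.card + 1 ↔ S'.pairs.card + 1 ≤ S.pairs.card := by
    rw [← Nat.cast_le (α := ℝ)]
    push_cast
    constructor <;> intro <;> linarith
  rw [energy_neg_one, energy_neg_one, hgap, SecStr.saturated_iff_two_mul_card_pairs_eq]
  constructor
  · intro h h2
    by_contra hne
    have := h hne
    omega
  · intro h hne
    have : 2 * S'.pairs.card ≠ S'.len := fun h2 => hne (h h2)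
    omega

end ConstantEnergy

namespace SecStr

variable {S : SecStr}

def slice (S : SecStr) (c k : ℕ) : SecStr where
  len := k
  pairs := (Finset.range k ×ˢ Finset.range k).filter fun q => (q.1 + c, q.2 + c) ∈ S.pairs
  lt q hq := by
    simp only [Finset.mem_filter] at hq
    have := S.lt _ hq.2
    simp only at this
    omega
  ub q hq := by
    simp only [Finset.mem_filter, Finset.mem_product, Finset.mem_range] at hq
    exact hq.1.2
  once p hp q hq hpq := by
    simp only [Finset.mem_filter] at hp hq
    have := S.once _ hp.2 _ hq.2 fun h => hpq (by simp only [Prod.mk.injEq] at h; ext <;> omega)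
    simp only at this
    omega
  noncross p hp q hq := by
    simp only [Finset.mem_filter] at hp hq
    have := S.noncross _ hp.2 _ hq.2
    simp only at this
    omega

@[simp]
theorem mem_slice_pairs {c k : ℕ} {q : ℕ × ℕ} :
    q ∈ (S.slice c k).pairs ↔ (q.1 + c, q.2 + c) ∈ S.pairs ∧ q.2 < k := by
  simp only [slice, Finset.mem_filter, Finset.mem_product, Finset.mem_range]
  constructor
  · exact fun h => ⟨h.2, h.1.2⟩
  · intro h
    have := S.lt _ h.1
    simp only at this
    exact ⟨⟨by omega, h.2⟩, h.1⟩

theorem sub_mem_slice_pairs {c k : ℕ} {p : ℕ × ℕ} (hp : p ∈ S.pairs) (hc : c ≤ p.1)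
    (hk : p.2 < c + k) : (p.1 - c, p.2 - c) ∈ (S.slice c k).pairs := by
  have := S.lt p hp
  rw [mem_slice_pairs, Nat.sub_add_cancel hc, Nat.sub_add_cancel (by omega)]
  exact ⟨hp, by omega⟩

theorem mem_image_slice_pairs {c k : ℕ} {p : ℕ × ℕ} :
    p ∈ (S.slice c k).pairs.image (fun q => (q.1 + c, q.2 + c)) ↔
      p ∈ S.pairs ∧ c ≤ p.1 ∧ p.2 < c + k := by
  simp only [Finset.mem_image, mem_slice_pairs]
  constructor
  · rintro ⟨q, ⟨hq, hqk⟩, rfl⟩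
    exact ⟨hq, by omega, by omega⟩
  · rintro ⟨hp, h1, h2⟩
    have := S.lt p hp
    refine ⟨_, mem_slice_pairs.mp (sub_mem_slice_pairs hp h1 h2), ?_⟩
    ext <;> simp only <;> omega

theorem compat_slice {α : Type*} [Inhabited α] {R : α → α → Prop} {w : List α}
    (h : compat R w S) {c k : ℕ} (hk : c + k ≤ w.length) :
    compat R ((w.drop c).take k) (S.slice c k) := by
  refine ⟨by simp only [slice, List.length_take, List.length_drop]; omega, fun q hq => ?_⟩
  rw [mem_slice_pairs] at hq
  have := S.lt _ hq.1
  simp only at this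
  have hget : ∀ j < k, ((w.drop c).take k).getD j default = w.getD (j + c) default := by
    intro j hj
    simp [List.getD_eq_getElem?_getD, hj, Nat.add_comm]
  rw [hget _ (by omega), hget _ hq.2]
  exact h.2 _ hq.1

theorem slice_saturated (hS : S.saturated) {c k : ℕ} (hk : c + k ≤ S.len)
    (hcl : ∀ p ∈ S.pairs, (c ≤ p.1 ∧ p.1 < c + k) ∨ (c ≤ p.2 ∧ p.2 < c + k) →
      c ≤ p.1 ∧ p.2 < c + k) :
    (S.slice c k).saturated := by
  intro i (hi : i < k)
  obtain ⟨p, hp, hpi⟩ := hS (c + i) (by omega)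
  have hwin := hcl p hp (by omega)
  exact ⟨_, sub_mem_slice_pairs hp hwin.1 hwin.2, by simp only; omega⟩

section Partner

variable {m : ℕ} (hS : S.saturated) (hm : (0, m) ∈ S.pairs)
include hS hm

theorem slice_zero_saturated : (S.slice 0 (m + 1)).saturated :=
  slice_saturated hS (by simpa using S.ub _ hm) fun p hp => by
    have := S.eq_or_inside_or_right_of_mem hm hp
    omega

theorem slice_one_saturated : (S.slice 1 (m - 1)).saturated :=
  slice_saturated hS (by have := S.ub _ hm; simp only at this; omega) fun p hp => by
    have := S.eq_or_inside_or_right_of_mem hm hp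
    have := S.lt p hp
    omega

theorem slice_succ_saturated : (S.slice (m + 1) (S.len - (m + 1))).saturated :=
  slice_saturated hS (by have := S.ub _ hm; simp only at this; omega) fun p hp => by
    have := S.eq_or_inside_or_right_of_mem hm hp
    have := S.lt p hp
    have := S.ub p hp
    omega

omit hS in
theorem pairs_eq_union_slice :
    S.pairs = (S.slice 0 (m + 1)).pairs ∪
      (S.slice (m + 1) (S.len - (m + 1))).pairs.image fun q => (q.1 + (m + 1), q.2 + (m + 1)) := by
  ext p
  rw [Finset.mem_union, mem_image_slice_pairs, mem_slice_pairs]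
  simp only [Nat.add_zero, Prod.mk.eta]
  constructor
  · intro hp
    have := S.eq_or_inside_or_right_of_mem hm hp
    have := S.ub p hp
    by_cases hp2 : p.2 < m + 1
    · exact Or.inl ⟨hp, hp2⟩
    · exact Or.inr ⟨hp, by omega, by omega⟩
  · rintro (⟨hp, -⟩ | ⟨hp, -⟩) <;> exact hp

end Partner

theorem pairs_eq_insert_image_slice (h : (0, S.len - 1) ∈ S.pairs) :
    S.pairs = insert (0, S.len - 1)
      ((S.slice 1 (S.len - 2)).pairs.image fun q => (q.1 + 1, q.2 + 1)) := by
  ext p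
  rw [Finset.mem_insert, mem_image_slice_pairs]
  constructor
  · intro hp
    have := S.eq_or_inside_or_right_of_mem h hp
    have := S.lt p hp
    have := S.ub p hp
    by_cases hpe : p = (0, S.len - 1)
    · exact Or.inl hpe
    · have : ¬ (p.1 = 0 ∧ p.2 = S.len - 1) := fun h' => hpe (Prod.ext h'.1 h'.2)
      exact Or.inr ⟨hp, by omega, by omega⟩
  · rintro (rfl | ⟨hp, -⟩)
    exacts [h, hp]

end SecStr

-- Where position `j` of a word lands when two letters are inserted before position `i`.
def skipTwo (i j : ℕ) : ℕ := if j < i then j else j + 2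

theorem getD_append_cons_cons_skipTwo {α : Type*} (u v : List α) (x y d : α) (j : ℕ) :
    (u ++ x :: y :: v).getD (skipTwo u.length j) d = (u ++ v).getD j d := by
  unfold skipTwo
  split_ifs with hj
  · rw [List.getD_append _ _ _ _ hj, List.getD_append _ _ _ _ hj]
  · rw [List.getD_append_right _ _ _ _ (by omega), List.getD_append_right _ _ _ _ (by omega),
      show j + 2 - u.length = j - u.length + 1 + 1 by omega, List.getD_cons_succ,
      List.getD_cons_succ]

namespace SecStr

variable {S : SecStr}

def insertAdj (S : SecStr) (i : ℕ) (hi : i ≤ S.len) : SecStr where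
  len := S.len + 2
  pairs := insert (i, i + 1) (S.pairs.image fun p => (skipTwo i p.1, skipTwo i p.2))
  lt p hp := by
    simp only [Finset.mem_insert, Finset.mem_image] at hp
    rcases hp with rfl | ⟨p, hp, rfl⟩
    · simp
    · have := S.lt p hp
      simp only [skipTwo]
      split_ifs <;> omega
  ub p hp := by
    simp only [Finset.mem_insert, Finset.mem_image] at hp
    rcases hp with rfl | ⟨p, hp, rfl⟩
    · simp only; omega
    · have := S.ub p hp
      simp only [skipTwo]
      split_ifs <;> omega
  once p hp q hq hpq := by
    simp only [Finset.mem_insert, Finset.mem_image] at hp hq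
    rcases hp with rfl | ⟨p, hp, rfl⟩ <;> rcases hq with rfl | ⟨q, hq, rfl⟩
    · exact absurd rfl hpq
    · simp only [skipTwo]; split_ifs <;> omega
    · simp only [skipTwo]; split_ifs <;> omega
    · have := S.once p hp q hq fun h => hpq (h ▸ rfl)
      simp only [skipTwo]
      split_ifs <;> omega
  noncross p hp q hq := by
    simp only [Finset.mem_insert, Finset.mem_image] at hp hq
    rcases hp with rfl | ⟨p, hp, rfl⟩ <;> rcases hq with rfl | ⟨q, hq, rfl⟩
    · omega
    · simp only [skipTwo]; split_ifs <;> omega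
    · simp only [skipTwo]; split_ifs <;> omega
    · have := S.noncross p hp q hq
      simp only [skipTwo]
      split_ifs <;> omega

theorem insertAdj_saturated (hS : S.saturated) {i : ℕ} (hi : i ≤ S.len) :
    (S.insertAdj i hi).saturated := by
  intro j (hj : j < S.len + 2)
  by_cases hji : j = i ∨ j = i + 1
  · exact ⟨(i, i + 1), Finset.mem_insert_self _ _, by omega⟩
  · have hskip : skipTwo i (if j < i then j else j - 2) = j := by
      unfold skipTwo; split_ifs <;> omega
    obtain ⟨p, hp, hpj⟩ := hS (if j < i then j else j - 2) (by split_ifs <;> omega)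
    refine ⟨(skipTwo i p.1, skipTwo i p.2),
      Finset.mem_insert_of_mem (Finset.mem_image_of_mem _ hp), ?_⟩
    rcases hpj with h | h
    · exact Or.inl (h ▸ hskip)
    · exact Or.inr (h ▸ hskip)

theorem compat_insertAdj {α : Type*} [Inhabited α] {R : α → α → Prop} {u v : List α}
    {x y : α} (h : compat R (u ++ v) S) (hxy : R x y) (hu : u.length ≤ S.len) :
    compat R (u ++ x :: y :: v) (S.insertAdj u.length hu) := by
  refine ⟨?_, fun p hp => ?_⟩
  · simp only [insertAdj, h.1, List.length_append, List.length_cons]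
    omega
  simp only [insertAdj, Finset.mem_insert, Finset.mem_image] at hp
  rcases hp with rfl | ⟨p, hp, rfl⟩
  · simpa [List.getD_append_right] using hxy
  · simpa only [getD_append_cons_cons_skipTwo] using h.2 p hp

end SecStr

theorem List.eq_cons_append_getD_cons {α : Type*} {w : List α} {m : ℕ} (h0 : 0 < m)
    (hm : m < w.length) (d : α) :
    w = w.getD 0 d :: ((w.drop 1).take (m - 1) ++ w.getD m d :: w.drop (m + 1)) := by
  obtain ⟨c, w', rfl⟩ := List.exists_cons_of_length_pos (h0.trans hm)
  obtain ⟨k, rfl⟩ := Nat.exists_eq_add_of_lt h0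
  simp only [List.length_cons] at hm
  simp only [List.getD_cons_zero, Nat.zero_add, Nat.add_sub_cancel, List.drop_succ_cons,
    List.drop_zero, List.getD_cons_succ, List.cons.injEq, true_and]
  rw [List.getD_eq_getElem _ _ (by omega), ← List.drop_eq_getElem_cons, List.take_append_drop]

section Saturable

variable {α : Type*} [Inhabited α] {R : α → α → Prop} {w : List α} {S : SecStr} {m : ℕ}

theorem saturable_nil : saturable R ([] : List α) :=
  ⟨⟨0, ∅, by simp, by simp, by simp, by simp⟩, ⟨rfl, by simp⟩,
    fun i hi => absurd hi i.not_lt_zero⟩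

variable (hc : compat R w S) (hS : S.saturated) (hm : (0, m) ∈ S.pairs)
include hc hS hm

theorem saturable_take_of_mem : saturable R (w.take (m + 1)) := by
  have hmw : m < w.length := hc.1 ▸ S.ub _ hm
  refine ⟨_, ?_, S.slice_zero_saturated hS hm⟩
  simpa using SecStr.compat_slice hc (c := 0) (k := m + 1) (by omega)

theorem saturable_inner_of_mem : saturable R ((w.drop 1).take (m - 1)) := by
  have hmw : m < w.length := hc.1 ▸ S.ub _ hm
  exact ⟨_, SecStr.compat_slice hc (by omega), S.slice_one_saturated hS hm⟩

theorem saturable_drop_of_mem : saturable R (w.drop (m + 1)) := by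
  have hmw : m < w.length := hc.1 ▸ S.ub _ hm
  refine ⟨_, ?_, S.slice_succ_saturated hS hm⟩
  have hk : (w.drop (m + 1)).take (S.len - (m + 1)) = w.drop (m + 1) :=
    List.take_of_length_le (by simp [hc.1])
  simpa only [hk] using SecStr.compat_slice hc (c := m + 1) (k := S.len - (m + 1))
    (by rw [hc.1]; omega)

end Saturable

namespace Base

def letter : Base → Bool × Bool
  | .A => (true, true) | .U => (true, false) | .G => (false, true) | .C => (false, false)

theorem letter_injective : Function.Injective letter := by
  intro x y; cases x <;> cases y <;> simp [letter]

theorem letter_comp (c : Base) : c.comp.letter = (c.letter.1, !c.letter.2) := by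
  cases c <;> rfl

end Base

def toFreeGroup (w : List Base) : FreeGroup Bool := FreeGroup.mk (w.map Base.letter)

theorem toFreeGroup_append (u v : List Base) :
    toFreeGroup (u ++ v) = toFreeGroup u * toFreeGroup v := by
  simp [toFreeGroup, FreeGroup.mul_mk]

theorem toFreeGroup_cons (c : Base) (w : List Base) :
    toFreeGroup (c :: w) = toFreeGroup [c] * toFreeGroup w :=
  toFreeGroup_append [c] w

theorem toFreeGroup_append_cons_comp_cons (u v : List Base) (c : Base) :
    toFreeGroup (u ++ c :: c.comp :: v) = toFreeGroup (u ++ v) := by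
  simp only [toFreeGroup, List.map_append, List.map_cons, Base.letter_comp]
  exact Quot.sound FreeGroup.Red.Step.not

theorem toFreeGroup_comp (c : Base) : toFreeGroup [c.comp] = (toFreeGroup [c])⁻¹ := by
  refine (inv_eq_of_mul_eq_one_right ?_).symm
  rw [← toFreeGroup_append]
  exact toFreeGroup_append_cons_comp_cons [] [] c

theorem toFreeGroup_eq_one_of_saturable {w : List Base} (h : saturable wcPair w) :
    toFreeGroup w = 1 := by
  induction hn : w.length using Nat.strong_induction_on generalizing w with
  | _ n ih =>
    obtain ⟨S, hc, hS⟩ := h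
    by_cases hw : w = []
    · subst hw; rfl
    obtain ⟨m, hm⟩ :=
      S.exists_mem_pairs_zero hS (by rw [hc.1]; exact List.length_pos_iff.mpr hw)
    have hm0 := S.lt _ hm
    have hmw := S.ub _ hm
    simp only [hc.1] at hm0 hmw
    have hcomp : w.getD m default = (w.getD 0 default).comp := wcPair_iff.mp (hc.2 _ hm)
    have hinner := ih _ (by simp only [List.length_take, List.length_drop]; omega)
      (saturable_inner_of_mem hc hS hm) rfl
    have houter := ih _ (by simp only [List.length_drop]; omega)
      (saturable_drop_of_mem hc hS hm) rfl
    rw [List.eq_cons_append_getD_cons hm0 hmw default, hcomp, toFreeGroup_cons (w.getD 0 default),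
      toFreeGroup_append, hinner, toFreeGroup_cons (w.getD 0 default).comp, houter,
      toFreeGroup_comp]
    group

theorem Base.exists_eq_append_cons_comp_cons {w : List Base} {L₁ L₂ : List (Bool × Bool)}
    {x : Bool} {b : Bool} (h : w.map letter = L₁ ++ (x, b) :: (x, !b) :: L₂) :
    ∃ u c v, w = u ++ c :: c.comp :: v ∧ (u ++ v).map letter = L₁ ++ L₂ := by
  obtain ⟨u, r, rfl, hu, hr⟩ := List.map_eq_append_iff.mp h
  obtain ⟨c, r, rfl, hc, hr⟩ := List.map_eq_cons_iff.mp hr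
  obtain ⟨d, v, rfl, hd, hv⟩ := List.map_eq_cons_iff.mp hr
  obtain rfl : d = c.comp := letter_injective (by rw [hd, letter_comp, hc])
  exact ⟨u, c, v, rfl, by simp [hu, hv]⟩

theorem saturable_of_red {L : List (Bool × Bool)} (h : FreeGroup.Red L []) {w : List Base}
    (hw : w.map Base.letter = L) : saturable wcPair w := by
  induction h using Relation.ReflTransGen.head_induction_on generalizing w with
  | refl =>
    obtain rfl := List.map_eq_nil_iff.mp hw
    exact saturable_nil
  | head hstep _ ih =>
    cases hstep
    obtain ⟨u, c, v, rfl, huv⟩ := Base.exists_eq_append_cons_comp_cons hw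
    obtain ⟨S, hc, hS⟩ := ih huv
    have hu : u.length ≤ S.len := by simp [hc.1]
    exact ⟨_, S.compat_insertAdj hc (wcPair_iff.mpr rfl) hu, S.insertAdj_saturated hS hu⟩

theorem saturable_iff_toFreeGroup_eq_one {w : List Base} :
    saturable wcPair w ↔ toFreeGroup w = 1 := by
  refine ⟨toFreeGroup_eq_one_of_saturable, fun h => ?_⟩
  rw [FreeGroup.one_eq_mk, toFreeGroup, FreeGroup.Red.exact] at h
  obtain ⟨L, hL, hnil⟩ := h
  rw [FreeGroup.Red.nil_iff.mp hnil] at hL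
  exact saturable_of_red hL rfl

theorem saturable_append_iff_right {u v : List Base} (hu : saturable wcPair u) :
    saturable wcPair (u ++ v) ↔ saturable wcPair v := by
  rw [saturable_iff_toFreeGroup_eq_one] at hu
  rw [saturable_iff_toFreeGroup_eq_one, saturable_iff_toFreeGroup_eq_one, toFreeGroup_append, hu,
    one_mul]

theorem saturable_flatten {l : List (List Base)} (hl : ∀ x ∈ l, saturable wcPair x) :
    saturable wcPair l.flatten := by
  induction l with
  | nil => exact saturable_nil
  | cons x l ih =>
    rw [List.flatten_cons, saturable_append_iff_right (hl x List.mem_cons_self)]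
    exact ih fun y hy => hl y (List.mem_cons_of_mem _ hy)

theorem saturable_cons_append_comp {u : List Base} (hu : saturable wcPair u) (c : Base) :
    saturable wcPair (c :: u ++ [c.comp]) := by
  rw [saturable_iff_toFreeGroup_eq_one] at hu ⊢
  rw [toFreeGroup_append, toFreeGroup_cons, hu, toFreeGroup_comp]
  group

section Atomic

variable {α : Type*} [Inhabited α] {R : α → α → Prop} {w : List α}

theorem atomicSaturable.mem_pairs_zero_length_sub_one (h : atomicSaturable R w) (hw : w ≠ [])
    {S : SecStr} (hc : compat R w S) (hS : S.saturated) : (0, w.length - 1) ∈ S.pairs := by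
  obtain ⟨m, hm⟩ := S.exists_mem_pairs_zero hS (by rw [hc.1]; exact List.length_pos_iff.mpr hw)
  have hmw := S.ub _ hm
  simp only [hc.1] at hmw
  obtain hm' | hm' := eq_or_lt_of_le (Nat.succ_le_of_lt hmw)
  · rwa [← hm', Nat.succ_sub_one]
  · exact absurd (saturable_take_of_mem hc hS hm) (h.2 (m + 1) m.succ_pos hm')

end Atomic

theorem atomicSaturable.getD_length_sub_one {w : List Base} (h : atomicSaturable wcPair w)
    (hw : w ≠ []) : w.getD (w.length - 1) default = w.headI.comp := by
  obtain ⟨S, hc, hS⟩ := h.1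
  have := wcPair_iff.mp (hc.2 _ (h.mem_pairs_zero_length_sub_one hw hc hS))
  obtain ⟨c, w', rfl⟩ := List.exists_cons_of_ne_nil hw
  exact this

theorem exists_blocks_of_saturable_take_flatten {l : List (List Base)}
    (hl : ∀ x ∈ l, atomicSaturable wcPair x) {n : ℕ}
    (h : saturable wcPair (l.flatten.take n)) :
    ∃ X Y, l = X ++ Y ∧ l.flatten.take n = X.flatten := by
  induction l generalizing n with
  | nil => exact ⟨[], [], rfl, by simp⟩
  | cons w l ih =>
    have hw := hl w List.mem_cons_self
    rw [List.flatten_cons, List.take_append] at h ⊢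
    by_cases hn : n < w.length
    · obtain rfl : n = 0 := by
        by_contra hn0
        exact hw.2 n (Nat.pos_of_ne_zero hn0) hn (by simpa [Nat.sub_eq_zero_of_le hn.le] using h)
      exact ⟨[], w :: l, rfl, by simp⟩
    · rw [List.take_of_length_le (by omega), saturable_append_iff_right hw.1] at h
      obtain ⟨X, Y, rfl, hX⟩ := ih (fun x hx => hl x (List.mem_cons_of_mem _ hx)) h
      refine ⟨w :: X, Y, rfl, ?_⟩
      rw [List.take_of_length_le (by omega), hX, List.flatten_cons]

section Blocks

variable {l : List (List Base)} (hl : ∀ x ∈ l, atomicSaturable wcPair x ∧ x ≠ []) {n : ℕ}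
  (h : saturable wcPair (l.flatten.take n))
include hl h

theorem exists_getD_eq_headI_of_saturable_take_flatten (hn : n < l.flatten.length) :
    ∃ x ∈ l, l.flatten.getD n default = x.headI := by
  obtain ⟨X, Y, rfl, hX⟩ := exists_blocks_of_saturable_take_flatten (fun x hx => (hl x hx).1) h
  have hnX : X.flatten.length = n := by rw [← hX, List.length_take]; omega
  rcases Y with _ | ⟨y, Y⟩
  · simp only [List.append_nil] at hn; omega
  · obtain ⟨c, y', rfl⟩ := List.exists_cons_of_ne_nil (hl y (by simp)).2
    refine ⟨c :: y', by simp, ?_⟩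
    rw [List.flatten_append, List.getD_append_right _ _ _ _ hnX.le, hnX, Nat.sub_self]
    rfl

theorem exists_getD_eq_comp_headI_of_saturable_take_flatten (hn0 : 0 < n)
    (hn : n ≤ l.flatten.length) : ∃ x ∈ l, l.flatten.getD (n - 1) default = x.headI.comp := by
  obtain ⟨X, Y, rfl, hX⟩ := exists_blocks_of_saturable_take_flatten (fun x hx => (hl x hx).1) h
  have hnX : X.flatten.length = n := by rw [← hX, List.length_take]; omega
  obtain rfl | ⟨X, x, rfl⟩ := X.eq_nil_or_concat
  · simp at hnX; omega
  · have hx := hl x (by simp)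
    have hxpos := List.length_pos_iff.mpr hx.2
    simp only [List.concat_eq_append, List.flatten_append, List.flatten_cons, List.flatten_nil,
      List.append_nil, List.length_append] at hnX ⊢
    refine ⟨x, by simp, ?_⟩
    rw [List.append_assoc, List.getD_append_right _ _ _ _ (by omega),
      List.getD_append _ _ _ _ (by omega), show n - 1 - X.flatten.length = x.length - 1 by omega]
    exact hx.1.getD_length_sub_one hx.2

end Blocks

theorem mem_pairs_zero_length_sub_one_of_append {w : List Base} {l : List (List Base)}
    (hw : atomicSaturable wcPair w) (hw0 : w ≠ [])
    (hl : ∀ x ∈ l, atomicSaturable wcPair x ∧ x ≠ [] ∧ x.headI ≠ w.headI)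
    {T : SecStr} (hT : compat wcPair (w ++ l.flatten) T) (hTsat : T.saturated) :
    (0, w.length - 1) ∈ T.pairs := by
  have hlen := hT.1
  simp only [List.length_append] at hlen
  have hwpos := List.length_pos_iff.mpr hw0
  obtain ⟨m, hm⟩ := T.exists_mem_pairs_zero hTsat (by omega)
  have hmT := T.ub _ hm
  simp only at hmT
  have hpre := saturable_take_of_mem hT hTsat hm
  rw [List.take_append] at hpre
  rcases lt_trichotomy (m + 1) w.length with hlt | heq | hgt
  · refine absurd ?_ (hw.2 _ m.succ_pos hlt)
    simpa [Nat.sub_eq_zero_of_le hlt.le] using hpre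
  · rwa [← heq, Nat.add_sub_cancel]
  · exfalso
    rw [List.take_of_length_le (by omega), saturable_append_iff_right hw.1] at hpre
    obtain ⟨x, hx, hxm⟩ := exists_getD_eq_comp_headI_of_saturable_take_flatten
      (fun x hx => ⟨(hl x hx).1, (hl x hx).2.1⟩) hpre (by omega) (by omega)
    have hm' : (w ++ l.flatten).getD m default = w.headI.comp := by
      have := wcPair_iff.mp (hT.2 _ hm)
      obtain ⟨c, w', rfl⟩ := List.exists_cons_of_ne_nil hw0
      exact this
    rw [List.getD_append_right _ _ _ _ (by omega),
      show m - w.length = m + 1 - w.length - 1 by omega, hxm] at hm'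
    exact (hl x hx).2.2 (Base.comp_injective hm')

theorem not_saturable_cons_take_flatten {a : Base} {l : List (List Base)}
    (hl : ∀ x ∈ l, atomicSaturable wcPair x ∧ x ≠ [] ∧ x.headI ≠ a.comp) {n : ℕ}
    (hn : n ≤ l.flatten.length) : ¬ saturable wcPair (a :: l.flatten.take n) := by
  rintro ⟨S, hc, hS⟩
  have hlen : S.len = n + 1 := by rw [hc.1, List.length_cons, List.length_take, min_eq_left hn]
  obtain ⟨m, hm⟩ := S.exists_mem_pairs_zero hS (by omega)
  have hm0 := S.lt _ hm
  have hmS := S.ub _ hm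
  simp only at hm0 hmS
  have hinner := saturable_inner_of_mem hc hS hm
  rw [List.drop_one, List.tail_cons, List.take_take, min_eq_left (by omega)] at hinner
  obtain ⟨x, hx, hxm⟩ := exists_getD_eq_headI_of_saturable_take_flatten
    (fun x hx => ⟨(hl x hx).1, (hl x hx).2.1⟩) hinner (by omega)
  have hm' : (a :: l.flatten.take n).getD m default = a.comp := wcPair_iff.mp (hc.2 _ hm)
  have hget : (l.flatten.take n).getD (m - 1) default = l.flatten.getD (m - 1) default := by
    simp [List.getD_eq_getElem?_getD, show m - 1 < n by omega]
  rw [show m = m - 1 + 1 by omega, List.getD_cons_succ, hget, hxm] at hm'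
  exact (hl x hx).2.2 hm'

theorem atomicSaturable_cons_flatten_append {a : Base} {l : List (List Base)}
    (hl : ∀ x ∈ l, atomicSaturable wcPair x ∧ x ≠ [] ∧ x.headI ≠ a.comp) :
    atomicSaturable wcPair (a :: l.flatten ++ [a.comp]) := by
  refine ⟨saturable_cons_append_comp (saturable_flatten fun x hx => (hl x hx).1.1) a,
    fun k hk0 hk => ?_⟩
  obtain ⟨k, rfl⟩ := Nat.exists_eq_add_of_lt hk0
  simp only [List.cons_append, List.length_cons, List.length_append, List.length_nil] at hk
  rw [List.cons_append, Nat.zero_add, List.take_succ_cons,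
    List.take_append_of_le_length (by omega)]
  exact not_saturable_cons_take_flatten hl (by omega)

section BlockStructure

variable {t : ℕ}

def blockOffset {α : Type*} (ws : Fin t → List α) (i : Fin t) : ℕ :=
  ∑ j ∈ Finset.univ.filter (· < i), (ws j).length

def blockPairs (Ss : Fin t → SecStr) (off : Fin t → ℕ) : Finset (ℕ × ℕ) :=
  Finset.univ.biUnion fun i => (Ss i).pairs.image fun p => (p.1 + off i, p.2 + off i)

theorem blockOffset_zero {α : Type*} (ws : Fin (t + 1) → List α) : blockOffset ws 0 = 0 :=
  Finset.sum_eq_zero fun j hj => absurd (Finset.mem_filter.mp hj).2 (Fin.not_lt_zero j)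

theorem blockOffset_succ {α : Type*} (ws : Fin (t + 1) → List α) (i : Fin t) :
    blockOffset ws i.succ = (ws 0).length + blockOffset (fun j => ws j.succ) i := by
  simp only [blockOffset, Finset.sum_filter, Fin.sum_univ_succ, Fin.succ_lt_succ_iff,
    Fin.succ_pos, if_true]

theorem blockPairs_succ (Ss : Fin (t + 1) → SecStr) (off : Fin (t + 1) → ℕ) :
    blockPairs Ss off = (Ss 0).pairs.image (fun p => (p.1 + off 0, p.2 + off 0)) ∪
      blockPairs (fun i => Ss i.succ) (fun i => off i.succ) := by
  ext p
  simp [blockPairs, Fin.exists_fin_succ]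

theorem image_blockPairs (Ss : Fin t → SecStr) (off : Fin t → ℕ) (c : ℕ) :
    (blockPairs Ss off).image (fun p => (p.1 + c, p.2 + c)) =
      blockPairs Ss (fun i => c + off i) := by
  simp only [blockPairs, Finset.biUnion_image, Finset.image_image]
  congr! 3 with i
  funext p
  ext <;> simp only [Function.comp_apply] <;> omega

end BlockStructure

theorem pairs_eq_blockPairs {t : ℕ} {ws : Fin t → List Base} {Ss : Fin t → SecStr}
    (hdes : ∀ i, isDesign wcPair (fun _ _ => (-1 : ℝ)) 1 (ws i) (Ss i))
    (hsat : ∀ i, (Ss i).saturated) (hatom : ∀ i, atomicSaturable wcPair (ws i))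
    (hne : ∀ i, ws i ≠ []) (hdist : ∀ i j, i ≠ j → (ws i).headI ≠ (ws j).headI)
    {T : SecStr} (hT : compat wcPair (List.ofFn ws).flatten T) (hTsat : T.saturated) :
    T.pairs = blockPairs Ss (blockOffset ws) := by
  induction t generalizing T with
  | zero =>
    ext p
    simp only [blockPairs, Finset.univ_eq_empty, Finset.biUnion_empty, Finset.notMem_empty,
      iff_false]
    intro hp
    have := T.ub p hp
    simp [hT.1] at this
  | succ t ih =>
    rw [List.ofFn_succ, List.flatten_cons] at hT
    have hlen := hT.1
    rw [List.length_append] at hlen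
    have hwpos := List.length_pos_iff.mpr (hne 0)
    have h0 : (0, (ws 0).length - 1) ∈ T.pairs := by
      refine mem_pairs_zero_length_sub_one_of_append (hatom 0) (hne 0) ?_ hT hTsat
      simp only [List.mem_ofFn]
      rintro _ ⟨i, rfl⟩
      exact ⟨hatom _, hne _, hdist _ _ (Fin.succ_ne_zero i)⟩
    have hfirst : T.slice 0 (ws 0).length = Ss 0 := by
      refine ((isDesign_neg_one_iff (hsat 0)).mp (hdes 0)).2 _ ?_ ?_
      · simpa using SecStr.compat_slice hT (c := 0) (k := (ws 0).length) (by simp)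
      · simpa [Nat.sub_add_cancel hwpos] using T.slice_zero_saturated hTsat h0
    have hrest : (T.slice (ws 0).length (T.len - (ws 0).length)).pairs =
        blockPairs (fun i => Ss i.succ) (blockOffset fun i => ws i.succ) := by
      refine ih (fun i => hdes _) (fun i => hsat _) (fun i => hatom _) (fun i => hne _)
        (fun i j hij => hdist _ _ ((Fin.succ_injective _).ne hij)) ?_ ?_
      · have hk := SecStr.compat_slice hT (c := (ws 0).length) (k := T.len - (ws 0).length)
          (by rw [List.length_append]; omega)
        rwa [List.drop_left, List.take_of_length_le (by omega)] at hk
      · simpa [Nat.sub_add_cancel hwpos] using T.slice_succ_saturated hTsat h0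
    have hsplit := T.pairs_eq_union_slice h0
    rw [Nat.sub_add_cancel hwpos, hfirst, hrest, image_blockPairs] at hsplit
    rw [hsplit, blockPairs_succ, blockOffset_zero]
    simp only [Nat.add_zero, Prod.mk.eta, Finset.image_id', blockOffset_succ]

theorem pairs_eq_insert_blockPairs {t : ℕ} {ws : Fin t → List Base} {Ss : Fin t → SecStr}
    (hdes : ∀ i, isDesign wcPair (fun _ _ => (-1 : ℝ)) 1 (ws i) (Ss i))
    (hsat : ∀ i, (Ss i).saturated) (hatom : ∀ i, atomicSaturable wcPair (ws i))
    (hne : ∀ i, ws i ≠ []) (hdist : ∀ i j, i ≠ j → (ws i).headI ≠ (ws j).headI) {a c : Base}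
    (hW : atomicSaturable wcPair (a :: (List.ofFn ws).flatten ++ [c])) {S : SecStr}
    (hc : compat wcPair (a :: (List.ofFn ws).flatten ++ [c]) S) (hS : S.saturated) :
    S.pairs = insert (0, S.len - 1) (blockPairs Ss fun i => 1 + blockOffset ws i) := by
  have h0 := hW.mem_pairs_zero_length_sub_one (by simp) hc hS
  rw [← hc.1] at h0
  have hlen : S.len = (List.ofFn ws).flatten.length + 2 := by simp [hc.1]
  have hinner : (S.slice 1 (S.len - 2)).pairs = blockPairs Ss (blockOffset ws) := by
    refine pairs_eq_blockPairs hdes hsat hatom hne hdist ?_ ?_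
    · have := SecStr.compat_slice hc (c := 1) (k := S.len - 2) (by rw [← hc.1]; omega)
      simpa [hlen] using this
    · simpa [Nat.sub_sub] using S.slice_one_saturated hS h0
  rw [S.pairs_eq_insert_image_slice h0, hinner, image_blockPairs]

/-- enclosing a concatenation of atomic saturable designs (with
pairwise distinct first letters, none equal to b) in a complementary pair a…b
yields an atomic saturable design for the enclosed structure. -/
theorem stmt7 (t : ℕ) (ws : Fin t → List Base) (Ss : Fin t → SecStr)
    (a b : Base) (hab : wcPair a b)
    (hdes : ∀ i, isDesign wcPair (fun _ _ => (-1 : ℝ)) 1 (ws i) (Ss i))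
    (hatom : ∀ i, atomicSaturable wcPair (ws i))
    (hsat : ∀ i, (Ss i).saturated)
    (hne : ∀ i, ws i ≠ [])
    (hb : ∀ i, (ws i).headI ≠ b)
    (hdist : ∀ i j, i ≠ j → (ws i).headI ≠ (ws j).headI)
    (W : List Base) (hW : W = a :: (List.ofFn ws).flatten ++ [b])
    (off : Fin t → ℕ)
    (hoff : ∀ i, off i = 1 + ∑ j ∈ Finset.univ.filter (· < i), (ws j).length)
    (SW : SecStr) (hlen : SW.len = W.length)
    (hpairs : SW.pairs = insert (0, W.length - 1)
      (Finset.univ.biUnion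
        (fun i => (Ss i).pairs.image (fun p => (p.1 + off i, p.2 + off i))))) :
    atomicSaturable wcPair W ∧ isDesign wcPair (fun _ _ => (-1 : ℝ)) 1 W SW := by
  obtain rfl : b = a.comp := wcPair_iff.mp hab
  obtain rfl : off = fun i => 1 + blockOffset ws i := funext hoff
  have hWatom : atomicSaturable wcPair W := by
    refine hW ▸ atomicSaturable_cons_flatten_append ?_
    simp only [List.mem_ofFn]
    rintro _ ⟨i, rfl⟩
    exact ⟨hatom i, hne i, hb i⟩
  have huniq : ∀ S, compat wcPair W S → S.saturated → S = SW := fun S hc hS => by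
    subst hW
    refine SecStr.ext (hc.1.trans hlen.symm) ?_
    rw [pairs_eq_insert_blockPairs hdes hsat hatom hne hdist hWatom hc hS, hpairs, hc.1]
    rfl
  obtain ⟨S, hc, hS⟩ := hWatom.1
  obtain rfl := huniq S hc hS
  exact ⟨hWatom, (isDesign_neg_one_iff hS).mpr ⟨hc, huniq⟩⟩
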